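/- arXiv:2311.01758 — 2 statements merged into one kernel-verified Lean document; each statement's English description precedes it below -/
import Mathlib

section
/- Let f_1, …, f_m : ℝⁿ → ℝ ∪ {+∞} be lower semicontinuous functions, each with unbounded domain and with dom(min{f_1,…,f_m}) unbounded. Then ∂(min{f_1, …, f_m})(∞) ⊆ ∂f_1(∞) ∪ … ∪ ∂f_m(∞). -/
open Filter Topology Set Pointwise RealInnerProductSpace

noncomputable section

variable {E : Type*} [NormedAddCommGroup E] [InnerProductSpace ℝ E]

/-- The Fréchet (regular) normal cone to `Ω` at `x`:
`{v | limsup_{y→x, y∈Ω} ⟪v, y-x⟫/‖y-x‖ ≤ 0}`, empty if `x ∉ Ω`. -/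
def FrechetNormalCone (Ω : Set E) (x : E) : Set E :=
  {v | x ∈ Ω ∧ ∀ ε > (0:ℝ), ∀ᶠ y in 𝓝[Ω] x, ⟪v, y - x⟫ ≤ ε * ‖y - x‖}

/-- The limiting (Mordukhovich) normal cone to `Ω` at `x`. -/
def LimitingNormalCone (Ω : Set E) (x : E) : Set E :=
  {v | ∃ xs vs : ℕ → E, (∀ k, vs k ∈ FrechetNormalCone Ω (xs k)) ∧
    Tendsto xs atTop (𝓝 x) ∧ Tendsto vs atTop (𝓝 v)}

/-- The normal cone to an unbounded set `Ω` at infinity. -/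
def NormalConeAtInfty (Ω : Set E) : Set E :=
  {v | ∃ xs vs : ℕ → E, (∀ k, vs k ∈ FrechetNormalCone Ω (xs k)) ∧
    Tendsto (fun k => ‖xs k‖) atTop atTop ∧ Tendsto vs atTop (𝓝 v)}

/-- The epigraph of `f : E → ℝ ∪ {+∞}` as a subset of the (ℓ²-)product `E × ℝ`. -/
def epiSet (f : E → EReal) : Set (WithLp 2 (E × ℝ)) :=
  {p | f (WithLp.equiv 2 (E × ℝ) p).1 ≤ ((WithLp.equiv 2 (E × ℝ) p).2 : EReal)}

/-- The point `(x, t)` of the (ℓ²-)product `E × ℝ`. -/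
def mkP (x : E) (t : ℝ) : WithLp 2 (E × ℝ) := (WithLp.equiv 2 (E × ℝ)).symm (x, t)

/-- `𝒩(f)`: limits of limiting normals to `epi f` at points `(x_k, f(x_k))` with `‖x_k‖ → ∞`. -/
def NclAtInfty (f : E → EReal) : Set (E × ℝ) :=
  {q | ∃ (xs : ℕ → E) (ws : ℕ → WithLp 2 (E × ℝ)),
    (∀ k, f (xs k) ≠ ⊤) ∧
    Tendsto (fun k => ‖xs k‖) atTop atTop ∧
    (∀ k, ws k ∈ LimitingNormalCone (epiSet f) (mkP (xs k) (f (xs k)).toReal)) ∧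
    Tendsto (fun k => WithLp.equiv 2 (E × ℝ) (ws k)) atTop (𝓝 q)}

/-- The limiting subdifferential of `f` at infinity: `∂f(∞) = {u | (u,-1) ∈ 𝒩(f)}`. -/
def subInfty (f : E → EReal) : Set E := {u | (u, (-1 : ℝ)) ∈ NclAtInfty f}

/-- The singular subdifferential of `f` at infinity: `∂^∞f(∞) = {u | (u,0) ∈ 𝒩(f)}`. -/
def singSubInfty (f : E → EReal) : Set E := {u | (u, (0 : ℝ)) ∈ NclAtInfty f}

/-- The singular subdifferential of `f` at a point `x ∈ dom f`:
`∂^∞f(x) = {v | (v,0) ∈ N((x,f(x)); epi f)}`, empty if `x ∉ dom f`. -/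
def singSub (f : E → EReal) (x : E) : Set E :=
  {v | f x ≠ ⊤ ∧ mkP v 0 ∈ LimitingNormalCone (epiSet f) (mkP x (f x).toReal)}

/-- `λ∘∂f(∞)`: equals `λ • ∂f(∞)` for `λ ≠ 0` and `∂^∞f(∞)` for `λ = 0`. -/
def lamCirc (f : E → EReal) (lam : ℝ) : Set E :=
  if lam = 0 then singSubInfty f else lam • subInfty f

/-- `f` is Lipschitz at infinity. -/
def LipschitzAtInfty (f : E → ℝ) : Prop :=
  ∃ L > (0:ℝ), ∃ R > (0:ℝ), ∀ x x' : E, R < ‖x‖ → R < ‖x'‖ → |f x - f x'| ≤ L * ‖x - x'‖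

end

/-
The epigraph of `min f_i` is the union of the closed epigraphs of the `f_i`. A limiting normal to a
finite union of closed sets is, along a pigeonhole subsequence of its defining sequence, a limiting
normal to one of the sets, at a base point lying in that set; for epigraphs this means the
corresponding `f_i` attains the minimum there. Applying this at each `x_k` of a sequence tending to
infinity, a second pigeonhole subsequence makes the active index constant.
-/

theorem exists_strictMono_forall_eq {ι : Type*} [Finite ι] (c : ℕ → ι) :
    ∃ i, ∃ φ : ℕ → ℕ, StrictMono φ ∧ ∀ k, c (φ k) = i := by
  obtain ⟨i, hi⟩ := Finite.exists_infinite_fiber c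
  exact ⟨i, extraction_of_frequently_atTop
    (Nat.frequently_atTop_iff_infinite.2 (Set.infinite_coe_iff.1 hi))⟩

theorem iInf_le_iff_of_finite {ι α : Type*} [Finite ι] [CompleteLinearOrder α] {f : ι → α}
    {a : α} (ha : a < ⊤) : ⨅ i, f i ≤ a ↔ ∃ i, f i ≤ a := by
  have := Fintype.ofFinite ι
  rw [← Finset.inf_univ_eq_iInf, Finset.inf_le_iff ha]
  simp only [Finset.mem_univ, true_and]

theorem epiSet_iInf {E ι : Type*} [Finite ι] (f : ι → E → EReal) :
    epiSet (fun x => ⨅ i, f i x) = ⋃ i, epiSet (f i) := by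
  ext p
  simp only [epiSet, mem_ofPred_eq, mem_iUnion, iInf_le_iff_of_finite (EReal.coe_lt_top _)]

section NormalCones

variable {E : Type*} [NormedAddCommGroup E] [InnerProductSpace ℝ E]

theorem frechetNormalCone_anti {Ω₁ Ω₂ : Set E} (h : Ω₁ ⊆ Ω₂) {x : E} (hx : x ∈ Ω₁) :
    FrechetNormalCone Ω₂ x ⊆ FrechetNormalCone Ω₁ x := by
  rintro v ⟨-, hv⟩
  exact ⟨hx, fun ε hε => (hv ε hε).filter_mono (nhdsWithin_mono x h)⟩

theorem exists_mem_limitingNormalCone_of_mem_iUnion {ι : Type*} [Finite ι] {Ω : ι → Set E}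
    (hΩ : ∀ i, IsClosed (Ω i)) {x v : E} (hv : v ∈ LimitingNormalCone (⋃ i, Ω i) x) :
    ∃ i, x ∈ Ω i ∧ v ∈ LimitingNormalCone (Ω i) x := by
  obtain ⟨xs, vs, hvs, hxs, hlim⟩ := hv
  choose c hc using fun k => mem_iUnion.1 (hvs k).1
  obtain ⟨i, φ, hφ, hcφ⟩ := exists_strictMono_forall_eq c
  have hxφ : ∀ k, xs (φ k) ∈ Ω i := fun k => hcφ k ▸ hc (φ k)
  have hxs' := hxs.comp hφ.tendsto_atTop
  refine ⟨i, (hΩ i).mem_of_tendsto hxs' (.of_forall hxφ), xs ∘ φ, vs ∘ φ, fun k => ?_, hxs',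
    hlim.comp hφ.tendsto_atTop⟩
  exact frechetNormalCone_anti (subset_iUnion Ω i) (hxφ k) (hvs (φ k))

theorem isClosed_epiSet {f : E → EReal} (hf : LowerSemicontinuous f) : IsClosed (epiSet f) :=
  (hf.isClosed_epigraph.preimage
    (continuous_fst.prodMk (continuous_coe_real_ereal.comp continuous_snd))).preimage
    (WithLp.prodContinuousLinearEquiv 2 ℝ E ℝ).continuous

theorem exists_limitingNormalCone_epiSet_of_iInf {ι : Type*} [Finite ι] {f : ι → E → EReal}
    (hf : ∀ i, LowerSemicontinuous (f i)) {x : E} (htop : ⨅ i, f i x ≠ ⊤)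
    (hbot : ∀ i, f i x ≠ ⊥) {w : WithLp 2 (E × ℝ)}
    (hw : w ∈ LimitingNormalCone (epiSet fun y => ⨅ i, f i y) (mkP x (⨅ i, f i x).toReal)) :
    ∃ j, f j x = ⨅ i, f i x ∧ w ∈ LimitingNormalCone (epiSet (f j)) (mkP x (f j x).toReal) := by
  rw [epiSet_iInf] at hw
  obtain ⟨j, hxj, hwj⟩ :=
    exists_mem_limitingNormalCone_of_mem_iUnion (fun i => isClosed_epiSet (hf i)) hw
  have hne_bot : ⨅ i, f i x ≠ ⊥ := by
    simpa only [Ne, ← le_bot_iff, iInf_le_iff_of_finite bot_lt_top, not_exists] using hbot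
  have hj : f j x = ⨅ i, f i x := by
    refine le_antisymm ?_ (iInf_le _ j)
    rw [← EReal.coe_toReal htop hne_bot]
    exact hxj
  exact ⟨j, hj, by rwa [hj]⟩

end NormalCones

theorem min_rule_at_infinity_general {n m : ℕ}
    (f : Fin m → EuclideanSpace ℝ (Fin n) → EReal)
    (hlsc : ∀ i, LowerSemicontinuous (f i)) (hbot : ∀ i x, f i x ≠ ⊥) :
    subInfty (fun x => ⨅ i, f i x) ⊆ ⋃ i, subInfty (f i) := by
  rintro u ⟨xs, ws, htop, hxs, hws, hlim⟩
  choose j hj hwj using fun k =>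
    exists_limitingNormalCone_epiSet_of_iInf hlsc (htop k) (fun i => hbot i (xs k)) (hws k)
  obtain ⟨i, φ, hφ, hjφ⟩ := exists_strictMono_forall_eq j
  refine mem_iUnion.2 ⟨i, xs ∘ φ, ws ∘ φ, fun k => ?_, hxs.comp hφ.tendsto_atTop, fun k => ?_,
    hlim.comp hφ.tendsto_atTop⟩
  · rw [← hjφ k, Function.comp_apply, hj]
    exact htop (φ k)
  · rw [← hjφ k]
    exact hwj (φ k)

/-- Proposition 2.16: minimum rule for the limiting subdifferential
at infinity. -/
theorem min_rule_at_infinity {n m : ℕ} (hm : 1 ≤ m)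
    (f : Fin m → EuclideanSpace ℝ (Fin n) → EReal)
    (hlsc : ∀ i, LowerSemicontinuous (f i)) (hbot : ∀ i x, f i x ≠ ⊥)
    (hdom : ∀ i, ¬ Bornology.IsBounded {x | f i x ≠ ⊤})
    (hdommin : ¬ Bornology.IsBounded {x | (⨅ i, f i x) ≠ ⊤}) :
    subInfty (fun x => ⨅ i, f i x) ⊆ ⋃ i, subInfty (f i) :=
  min_rule_at_infinity_general f hlsc hbot
end

section
/- Let f: ℝ → ℝ be given by f(x) = e^x + 1/(|x| + 1). Then the singular subdifferential of f at infinity is ∂^∞f(∞) = [0, +∞). Moreover, f is bounded from below on ℝ₋ = (−∞, 0] but does not attain its infimum on ℝ₋. -/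
open Filter Topology Set Pointwise RealInnerProductSpace

/-! `f` is monotone: on `(-∞, 0]` both summands increase, and on `[0, ∞)` one has
`f' x = eˣ - 1/(x+1)² ≥ 0`. Hence `epi f` is invariant under shifts to the left, which forces
every limiting normal `(u, s)` to `epi f` to have `u ≥ 0`. Conversely, at `xₖ → ∞` the normals
`(f' xₖ, -1)` rescaled by `u / f' xₖ` tend to `(u, 0)` because `f' xₖ → ∞`. Finally `f > 0`
while `f x → 0` as `x → -∞`, so the infimum `0` of `f` on `ℝ₋` is not attained. -/

section NormalCones

variable {E : Type*} [NormedAddCommGroup E] [InnerProductSpace ℝ E] {Ω : Set E} {x v : E}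

lemma frechetNormalCone_subset_limitingNormalCone :
    FrechetNormalCone Ω x ⊆ LimitingNormalCone Ω x :=
  fun v hv => ⟨fun _ => x, fun _ => v, fun _ => hv, tendsto_const_nhds, tendsto_const_nhds⟩

lemma smul_mem_frechetNormalCone {a : ℝ} (ha : 0 ≤ a) (hv : v ∈ FrechetNormalCone Ω x) :
    a • v ∈ FrechetNormalCone Ω x := by
  refine ⟨hv.1, fun ε hε => ?_⟩
  have hscale : a * (ε / (a + 1)) ≤ ε := by
    rw [mul_div_assoc', div_le_iff₀ (by positivity)]
    nlinarith
  filter_upwards [hv.2 (ε / (a + 1)) (by positivity)] with y hy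
  calc ⟪a • v, y - x⟫ = a * ⟪v, y - x⟫ := real_inner_smul_left _ _ _
    _ ≤ a * (ε / (a + 1) * ‖y - x‖) := by gcongr
    _ = a * (ε / (a + 1)) * ‖y - x‖ := by ring
    _ ≤ ε * ‖y - x‖ := by gcongr

lemma inner_nonpos_of_mem_frechetNormalCone {d : E} (hv : v ∈ FrechetNormalCone Ω x)
    (hd : ∀ᶠ t in 𝓝[>] (0 : ℝ), x + t • d ∈ Ω) : ⟪v, d⟫ ≤ 0 := by
  have hray : Tendsto (fun t : ℝ => x + t • d) (𝓝[>] 0) (𝓝[Ω] x) := by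
    refine tendsto_nhdsWithin_iff.2 ⟨?_, hd⟩
    refine ((Continuous.tendsto' ?_ 0 x (by simp)).mono_left nhdsWithin_le_nhds)
    fun_prop
  refine le_of_forall_pos_le_add fun ε hε => ?_
  have hδ : 0 < ε / (‖d‖ + 1) := by positivity
  obtain ⟨t, hvt, ht⟩ := ((hray.eventually (hv.2 _ hδ)).and self_mem_nhdsWithin).exists
  have ht : 0 < t := ht
  simp only [add_sub_cancel_left, real_inner_smul_right, norm_smul, Real.norm_of_nonneg ht.le,
    mul_left_comm _ t] at hvt
  calc ⟪v, d⟫ ≤ ε / (‖d‖ + 1) * ‖d‖ := le_of_mul_le_mul_left hvt ht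
    _ ≤ 0 + ε := by
      rw [zero_add, div_mul_eq_mul_div, div_le_iff₀ (by positivity)]
      nlinarith [norm_nonneg d]

lemma inner_nonpos_of_mem_limitingNormalCone {d : E} (hv : v ∈ LimitingNormalCone Ω x)
    (hd : ∀ y ∈ Ω, ∀ᶠ t in 𝓝[>] (0 : ℝ), y + t • d ∈ Ω) : ⟪v, d⟫ ≤ 0 := by
  obtain ⟨_, vs, hvs, -, hlim⟩ := hv
  exact le_of_tendsto (hlim.inner tendsto_const_nhds) <| Eventually.of_forall fun k =>
    inner_nonpos_of_mem_frechetNormalCone (hvs k) (hd _ (hvs k).1)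

end NormalCones

lemma add_smul_mem_epiSet_of_monotone {f : ℝ → EReal} (hf : Monotone f)
    {p : WithLp 2 (ℝ × ℝ)} (hp : p ∈ epiSet f) {t : ℝ} (ht : 0 ≤ t) :
    p + t • mkP (-1) 0 ∈ epiSet f := by
  simp only [epiSet, Set.mem_ofPred_eq] at hp ⊢
  simpa [mkP] using (hf (by simpa using ht)).trans hp

lemma fst_nonneg_of_mem_nclAtInfty {f : ℝ → EReal} (hf : Monotone f) {q : ℝ × ℝ}
    (hq : q ∈ NclAtInfty f) : 0 ≤ q.1 := by
  obtain ⟨_, ws, -, -, hws, hlim⟩ := hq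
  have hrec : ∀ p ∈ epiSet f, ∀ᶠ t in 𝓝[>] (0 : ℝ), p + t • mkP (-1) 0 ∈ epiSet f :=
    fun p hp => eventually_nhdsWithin_of_forall fun t ht =>
      add_smul_mem_epiSet_of_monotone hf hp (le_of_lt ht)
  refine ge_of_tendsto ((continuous_fst.tendsto _).comp hlim) (Eventually.of_forall fun k => ?_)
  simpa [mkP, WithLp.prod_inner_apply] using inner_nonpos_of_mem_limitingNormalCone (hws k) hrec

lemma mkP_mem_frechetNormalCone_epiSet_of_hasDerivAt {f : ℝ → ℝ} {x c : ℝ}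
    (hd : HasDerivAt f c x) :
    mkP c (-1) ∈ FrechetNormalCone (epiSet fun y => (f y : EReal)) (mkP x (f x)) := by
  refine ⟨by simp [epiSet, mkP], fun ε hε => ?_⟩
  have hfst : Tendsto (fun q : WithLp 2 (ℝ × ℝ) => q.fst)
      (𝓝[epiSet fun y => (f y : EReal)] (mkP x (f x))) (𝓝 x) :=
    ((WithLp.prodContinuousLinearEquiv 2 ℝ ℝ ℝ).continuous.fst.tendsto' _ x
      (by simp [mkP])).mono_left nhdsWithin_le_nhds
  filter_upwards [hfst.eventually (hd.isLittleO.def hε), self_mem_nhdsWithin] with q hq hqepi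
  have hle : f q.fst ≤ q.snd := by simpa [epiSet] using hqepi
  have hinner : ⟪mkP c (-1), q - mkP x (f x)⟫ = c * (q.fst - x) - (q.snd - f x) := by
    simp [mkP, WithLp.prod_inner_apply]
    ring
  rw [hinner]
  calc c * (q.fst - x) - (q.snd - f x) ≤ -(f q.fst - f x - (q.fst - x) • c) := by
        rw [smul_eq_mul]; linarith
    _ ≤ ε * ‖q.fst - x‖ := (neg_le_abs _).trans hq
    _ ≤ ε * ‖q - mkP x (f x)‖ := by
      gcongr
      simpa [mkP] using WithLp.norm_fst_le (x := q - mkP x (f x))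

lemma Ici_subset_singSubInfty {f f' : ℝ → ℝ} (hd : ∀ᶠ x in atTop, HasDerivAt f (f' x) x)
    (hf' : Tendsto f' atTop atTop) : Ici 0 ⊆ singSubInfty fun x => (f x : EReal) := by
  intro u hu
  obtain ⟨N, hN⟩ := (hd.and (hf'.eventually_gt_atTop 0)).exists_forall_of_atTop
  set xs : ℕ → ℝ := fun k => N + k
  have hxs : Tendsto xs atTop atTop := tendsto_atTop_add_const_left _ N tendsto_natCast_atTop_atTop
  have hN' : ∀ k, HasDerivAt f (f' (xs k)) (xs k) ∧ 0 < f' (xs k) :=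
    fun k => hN _ (le_add_of_nonneg_right k.cast_nonneg)
  refine ⟨xs, fun k => (u / f' (xs k)) • mkP (f' (xs k)) (-1), fun k => EReal.coe_ne_top _,
    tendsto_norm_atTop_atTop.comp hxs, fun k => ?_, ?_⟩
  · simpa using frechetNormalCone_subset_limitingNormalCone
      (smul_mem_frechetNormalCone (div_nonneg hu (hN' k).2.le)
        (mkP_mem_frechetNormalCone_epiSet_of_hasDerivAt (hN' k).1))
  · have hcancel : ∀ k, u / f' (xs k) * f' (xs k) = u :=
      fun k => div_mul_cancel₀ u (hN' k).2.ne'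
    have hlim : Tendsto (fun k => u / f' (xs k)) atTop (𝓝 0) :=
      tendsto_const_nhds.div_atTop (hf'.comp hxs)
    simpa [mkP, hcancel] using tendsto_const_nhds.prodMk_nhds hlim.neg

lemma one_div_add_one_sq_le_one {x : ℝ} (hx : 0 ≤ x) : 1 / (x + 1) ^ 2 ≤ 1 :=
  (div_le_one (by positivity)).2 (by nlinarith)

lemma tendsto_exp_sub_one_div_add_one_sq_atTop :
    Tendsto (fun x => Real.exp x - 1 / (x + 1) ^ 2) atTop atTop := by
  refine tendsto_atTop_mono' atTop ?_ (tendsto_atTop_add_const_right _ (-1) Real.tendsto_exp_atTop)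
  filter_upwards [eventually_ge_atTop 0] with x hx
  linarith [one_div_add_one_sq_le_one hx]

namespace ExpAddInvOneAddAbs

variable {f : ℝ → ℝ} (hf : ∀ x, f x = Real.exp x + 1 / (|x| + 1))
include hf

lemma hasDerivAt_of_pos {x : ℝ} (hx : 0 < x) :
    HasDerivAt f (Real.exp x - 1 / (x + 1) ^ 2) x := by
  have hg : HasDerivAt (fun t => Real.exp t + (t + 1)⁻¹) (Real.exp x + -1 / (x + 1) ^ 2) x :=
    (Real.hasDerivAt_exp x).add (((hasDerivAt_id x).add_const 1).inv (by positivity))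
  rw [neg_div, ← sub_eq_add_neg] at hg
  refine hg.congr_of_eventuallyEq ?_
  filter_upwards [eventually_gt_nhds hx] with t ht
  rw [hf, abs_of_pos ht, one_div]

lemma continuous : Continuous f := by
  rw [funext hf]
  fun_prop (disch := intro; positivity)

lemma monotone : Monotone f := by
  refine MonotoneOn.Iic_union_Ici (a := 0) (fun x hx y hy hxy => ?_) ?_
  · have hxy' : |y| ≤ |x| := by
      rw [abs_of_nonpos hy, abs_of_nonpos hx]; linarith
    rw [hf, hf]
    gcongr
  · refine monotoneOn_of_hasDerivWithinAt_nonneg (f' := fun x => Real.exp x - 1 / (x + 1) ^ 2)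
      (convex_Ici 0) (continuous hf).continuousOn (fun x hx => ?_) (fun x hx => ?_)
    · rw [interior_Ici] at hx ⊢
      exact (hasDerivAt_of_pos hf hx).hasDerivWithinAt
    · rw [interior_Ici] at hx
      linarith [one_div_add_one_sq_le_one hx.le, Real.one_le_exp hx.le]

lemma tendsto_atBot : Tendsto f atBot (𝓝 0) := by
  have hrec : Tendsto (fun x : ℝ => 1 / (|x| + 1)) atBot (𝓝 0) := by
    simpa only [Function.comp_def, one_div] using tendsto_inv_atTop_zero.comp
      (tendsto_atTop_add_const_right _ 1 tendsto_abs_atBot_atTop)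
  simpa [funext hf] using Real.tendsto_exp_atBot.add hrec

end ExpAddInvOneAddAbs

/-- Example 4.7: for `f(x) = eˣ + 1/(|x|+1)` one has `∂^∞f(∞) = [0,∞)`;
moreover `f` is bounded below on `ℝ₋ = (-∞,0]` but does not attain its infimum there. -/
theorem example_exp_singular_subInfty (f : ℝ → ℝ)
    (hf : ∀ x, f x = Real.exp x + 1 / (|x| + 1)) :
    singSubInfty (fun x : ℝ => ((f x : ℝ) : EReal)) = Set.Ici (0:ℝ) ∧
    BddBelow (f '' Set.Iic (0:ℝ)) ∧
    ∀ x ∈ Set.Iic (0:ℝ), sInf (f '' Set.Iic (0:ℝ)) < f x := by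
  have hpos : ∀ x, 0 < f x := fun x => by rw [hf]; positivity
  have hbdd : BddBelow (f '' Iic 0) := ⟨0, by rintro _ ⟨x, -, rfl⟩; exact (hpos x).le⟩
  have hderiv : ∀ᶠ x in atTop, HasDerivAt f (Real.exp x - 1 / (x + 1) ^ 2) x :=
    (eventually_gt_atTop 0).mono fun x hx => ExpAddInvOneAddAbs.hasDerivAt_of_pos hf hx
  refine ⟨Subset.antisymm (fun u hu => ?_)
    (Ici_subset_singSubInfty hderiv tendsto_exp_sub_one_div_add_one_sq_atTop), hbdd, fun x _ => ?_⟩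
  · exact fst_nonneg_of_mem_nclAtInfty
      (EReal.coe_strictMono.monotone.comp (ExpAddInvOneAddAbs.monotone hf)) hu
  · have hinf : sInf (f '' Iic 0) ≤ 0 := by
      refine ge_of_tendsto (ExpAddInvOneAddAbs.tendsto_atBot hf) ?_
      filter_upwards [eventually_le_atBot 0] with y hy using csInf_le hbdd ⟨y, hy, rfl⟩
    exact hinf.trans_lt (hpos x)
end
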